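/- arXiv:1403.6852 — 5 statements merged into one kernel-verified Lean document; each statement's English description precedes it below -/
import Mathlib

section
/- Let k be an algebraically closed field of characteristic zero, let n ≥ 2, d ≥ 1, and let m_1,…,m_{n+2} be integers with 0 ≤ m_i ≤ d+1 for all i. Consider the n+2 points of ℙ^n(k) given by the coordinate points e_1,…,e_{n+1} together with u = [1 : 1 : ⋯ : 1] (a configuration of n+2 points in general position). Set b := Σ_{i=1}^{n+2} m_i − nd and assume that either b = 1, or b ≤ 0 and m_j = d+1 for some j. Then: (i) the only homogeneous polynomial of degree d having multiplicity at least m_i at each of these n+2 points is the zero polynomial; and (ii) ℓ(n,d; m_1,…,m_{n+2}) = 0. (This is the h^0(D) = ldim(D) = 0 part of the theorem on non-effective divisors with s = n+2 points in the chambers b = 1, or b ≤ 0 with some multiplicity d+1.) -/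
/-!
(i) A form of degree `d` with a point of multiplicity `d + 1` is zero, since the `t`-th power
of the ideal of a point only contains forms whose monomials have degree at least `t`. Otherwise
all `m i ≤ d` and `b = 1`. Multiplicity `m j` at the coordinate point `e_j` bounds the exponents
of `F` by `b_j ≤ d - m_j =: c_j`, and `∑ c = d + m_{n+1} - 1`. Multiplicity `t = m_{n+1}` at
`u = (1, …, 1)` makes the functional `q ↦ ∑_b F_b q(b)` vanish on all polynomials `q` of degree
`< t`: applying the Euler operators `x_i ∂_i` multiplies `F_b` by `b_i` and lowers the order of
vanishing at `u` by one. Given an exponent `b₀` of `F`, the product of falling factorials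
`q(x) = ∏_i (c_i - x_i)(c_i - x_i - 1)⋯(b₀_i - x_i + 1)` has degree `∑ c - d = t - 1` and,
among the exponents of degree `d` in the box `c`, is nonzero only at `b₀`. So
`F_{b₀} ∏ (c_i - b₀_i)! = 0`.

(ii) With `e_i = d + 1 - m_i`, the summand of `ℓ` indexed by `I` is the number of points of
`ℕ^{n+1}` with coordinate sum `d - ∑_{i ∈ I} e_i`. Separating `I ∋ n + 1`, inclusion–exclusion
turns `ℓ` into the difference of the numbers of lattice points of the box `a_i < e_i` (`i ≤ n`)
with coordinate sum `d` and `m_{n+1} - 1`. If some `e_i = 0` the box is empty; if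
`m_{n+1} = d + 1` the two slices coincide; otherwise `b = 1` and the reflection `a ↦ (e - 1) - a`
of the box exchanges them.
-/

open MvPolynomial Finset

noncomputable section

/-- The homogeneous vanishing ideal of the point of `ℙ^{N-1}` represented by the
vector `v`: the ideal generated by the linear forms vanishing at `v`. -/
def pointIdeal (k : Type) [Field k] (N : ℕ) (v : Fin N → k) :
    Ideal (MvPolynomial (Fin N) k) :=
  Ideal.span {P | P ∈ homogeneousSubmodule (Fin N) k 1 ∧ eval v P = 0}

/-- The homogeneous vanishing ideal `(x_j : j ≠ i)` of the `i`-th coordinate point. -/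
def coordIdeal (k : Type) [Field k] (N : ℕ) (i : ℕ) :
    Ideal (MvPolynomial (Fin N) k) :=
  Ideal.span {P | ∃ j : Fin N, (j : ℕ) ≠ i ∧ P = X j}

/-- The linear system `L_{n,d}(m_1,…,m_s; p_1,…,p_s)` of degree-`d` forms in `n+1`
variables with multiplicity at least `m i` at the point `p i`, for `i < s`. -/
def linSys (k : Type) [Field k] (n d s : ℕ) (m : ℕ → ℕ)
    (p : ℕ → (Fin (n + 1) → k)) : Submodule k (MvPolynomial (Fin (n + 1)) k) :=
  (homogeneousSubmodule (Fin (n + 1)) k d) ⊓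
    ⨅ i ∈ Finset.range s,
      Submodule.restrictScalars k (pointIdeal k (n + 1) (p i) ^ (m i))

/-- The generic dimension of `L_{n,d}(m_1,…,m_s)`: the minimum over all `s`-tuples of
points of `ℙ^n(k)` of the dimension of the corresponding linear system. -/
def gdim (k : Type) [Field k] (n d s : ℕ) (m : ℕ → ℕ) : ℕ :=
  sInf {N | ∃ p : ℕ → (Fin (n + 1) → k),
    (∀ i < s, p i ≠ 0) ∧ N = Module.finrank k ↥(linSys k n d s m p)}

/-- `k_I = max(Σ_{i∈I} m_i − (|I|−1)d, 0)`. -/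
def kIdx (d : ℕ) (m : ℕ → ℕ) (I : Finset ℕ) : ℤ :=
  max ((∑ i ∈ I, (m i : ℤ)) - ((I.card : ℤ) - 1) * d) 0

/-- `binom(a, n)`, understood to be `0` whenever `a < n` (in particular for negative `a`). -/
def binomZ (a : ℤ) (n : ℕ) : ℤ :=
  if a < (n : ℤ) then 0 else ((a.toNat).choose n : ℤ)

/-- The (affine) linear virtual dimension
`ℓ(n,d;m_1,…,m_s) = Σ_{I ⊆ {1,…,s}} (−1)^{|I|} binom(n + k_I − |I|, n)`. -/
def ldim (n d s : ℕ) (m : ℕ → ℕ) : ℤ :=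
  ∑ I ∈ (Finset.range s).powerset,
    (-1) ^ I.card * binomZ ((n : ℤ) + kIdx d m I - (I.card : ℤ)) n

/-- The `n+2` points of `ℙ^n` in general position: the coordinate points
`e_1,…,e_{n+1}` together with the all-ones point `u`. -/
def genCfg (k : Type) [Field k] (n : ℕ) : ℕ → (Fin (n + 1) → k) :=
  fun i j => if i = n + 1 then 1 else if (j : ℕ) = i then 1 else 0

section LatticePoints

variable {ι : Type*} [DecidableEq ι]

theorem Finset.natCast_card_filter_forall_not {α : Type*} (A : Finset α) (s : Finset ι)
    (P : ι → α → Prop) [∀ i, DecidablePred (P i)] :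
    (#{a ∈ A | ∀ i ∈ s, ¬ P i a} : ℤ) =
      ∑ t ∈ s.powerset, (-1 : ℤ) ^ #t * #{a ∈ A | ∀ i ∈ t, P i a} := by
  have hpowerset : ∀ a, {t ∈ s.powerset | ∀ i ∈ t, P i a} = {i ∈ s | P i a}.powerset := by
    intro a
    ext t
    simp only [mem_filter, mem_powerset, subset_iff]
    grind
  have hsign : ∀ a, ∑ t ∈ s.powerset, (-1 : ℤ) ^ #t * (if ∀ i ∈ t, P i a then 1 else 0) =
      if ∀ i ∈ s, ¬ P i a then 1 else 0 := by
    intro a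
    simp only [mul_ite, mul_one, mul_zero]
    rw [← sum_filter, hpowerset, sum_powerset_neg_one_pow_card]
    simp only [filter_eq_empty_iff]
  simp only [natCast_card_filter, mul_sum]
  rw [sum_comm]
  exact sum_congr rfl fun a _ => (hsign a).symm

theorem binomZ_natCast_add (n r : ℕ) : binomZ (n + r) n = (n + r).choose n := by
  rw [binomZ, if_neg (by omega)]
  rfl

theorem binomZ_eq_zero_of_lt {a : ℤ} {n : ℕ} (h : a < n) : binomZ a n = 0 := if_pos h

variable {s : Finset ι} {n : ℕ}

theorem natCast_card_finsuppAntidiag (hs : #s = n + 1) (r : ℕ) :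
    (#(s.finsuppAntidiag r) : ℤ) = binomZ (n + r) n := by
  rw [card_finsuppAntidiag_nat_eq_choose, hs, binomZ_natCast_add,
    show n + 1 + r - 1 = n + r by omega, Nat.choose_symm_add]

theorem card_finsuppAntidiag_filter_le {g : ι →₀ ℕ} (hg : g.support ⊆ s) {r : ℕ}
    (hr : ∑ i ∈ s, g i ≤ r) :
    #{a ∈ s.finsuppAntidiag r | g ≤ a} = #(s.finsuppAntidiag (r - ∑ i ∈ s, g i)) := by
  refine card_nbij' (· - g) (· + g) (fun a ha => ?_) (fun a ha => ?_)
    (fun a ha => tsub_add_cancel_of_le (mem_filter.mp ha).2) (fun a _ => add_tsub_cancel_right a g)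
  · simp only [coe_filter, mem_finsuppAntidiag, Set.mem_ofPred_eq, mem_coe] at ha ⊢
    obtain ⟨⟨hsum, hsupp⟩, hga⟩ := ha
    refine ⟨?_, Finsupp.support_tsub.trans hsupp⟩
    show ∑ i ∈ s, (a i - g i) = _
    rw [sum_tsub_distrib _ fun i _ => hga i, hsum]
  · simp only [coe_filter, mem_finsuppAntidiag, Set.mem_ofPred_eq, mem_coe] at ha ⊢
    refine ⟨⟨?_, Finsupp.support_add.trans (union_subset ha.2 hg)⟩, le_add_self⟩
    show ∑ i ∈ s, (a i + g i) = _
    rw [sum_add_distrib, ha.1, Nat.sub_add_cancel hr]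

theorem filter_le_finsuppAntidiag_eq_empty {g : ι →₀ ℕ} {r : ℕ} (hr : r < ∑ i ∈ s, g i) :
    {a ∈ s.finsuppAntidiag r | g ≤ a} = ∅ := by
  refine filter_eq_empty_iff.mpr fun a ha hga => hr.not_ge ?_
  rw [← (mem_finsuppAntidiag.mp ha).1]
  exact sum_le_sum fun i _ => hga i

theorem natCast_card_finsuppAntidiag_filter_forall_le (hs : #s = n + 1) {t : Finset ι}
    (ht : t ⊆ s) (e : ι → ℕ) (r : ℕ) :
    (#{a ∈ s.finsuppAntidiag r | ∀ i ∈ t, e i ≤ a i} : ℤ) =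
      binomZ (n + r - ∑ i ∈ t, (e i : ℤ)) n := by
  set g : ι →₀ ℕ := Finsupp.indicator t fun i _ => e i
  have hg : ∀ i, g i = if i ∈ t then e i else 0 := fun i => by
    simp [g, Finsupp.indicator_apply]
  have hle : ∀ a : ι →₀ ℕ, (∀ i ∈ t, e i ≤ a i) ↔ g ≤ a := fun a => by
    simp only [Finsupp.le_def, hg]
    grind
  have hsum : ∑ i ∈ s, g i = ∑ i ∈ t, e i := by
    simp only [hg, sum_ite_mem, inter_eq_right.mpr ht]
  simp only [hle]
  rcases le_or_gt (∑ i ∈ s, g i) r with hr | hr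
  · rw [card_finsuppAntidiag_filter_le ((Finsupp.support_indicator_subset _ _).trans ht) hr,
      natCast_card_finsuppAntidiag hs, Nat.cast_sub hr, hsum, Nat.cast_sum, add_sub_assoc]
  · rw [filter_le_finsuppAntidiag_eq_empty hr, card_empty, Nat.cast_zero,
      binomZ_eq_zero_of_lt (by rw [← Nat.cast_sum, ← hsum]; omega)]

def boxCount (s : Finset ι) (e : ι → ℕ) (R : ℤ) : ℕ :=
  if R < 0 then 0 else #{a ∈ s.finsuppAntidiag R.toNat | ∀ i ∈ s, a i < e i}

theorem sum_powerset_binomZ_eq_boxCount (hs : #s = n + 1) (e : ι → ℕ) (R : ℤ) :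
    ∑ t ∈ s.powerset, (-1 : ℤ) ^ #t * binomZ (n + R - ∑ i ∈ t, (e i : ℤ)) n = boxCount s e R := by
  rw [boxCount]
  split_ifs with hR
  · refine sum_eq_zero fun t _ => ?_
    have : 0 ≤ ∑ i ∈ t, (e i : ℤ) := sum_nonneg fun i _ => Int.natCast_nonneg _
    rw [binomZ_eq_zero_of_lt (by omega), mul_zero]
  · lift R to ℕ using not_lt.mp hR
    simp only [Int.toNat_natCast, ← not_le]
    rw [natCast_card_filter_forall_not]
    exact sum_congr rfl fun t ht => by
      rw [natCast_card_finsuppAntidiag_filter_forall_le hs (mem_powerset.mp ht)]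

variable {e : ι → ℕ}

theorem boxCount_eq_zero_of_lt {R : ℤ} (h : ∑ i ∈ s, ((e i : ℤ) - 1) < R) :
    boxCount s e R = 0 := by
  rw [boxCount]
  split_ifs with hR
  · rfl
  refine card_eq_zero.mpr (filter_eq_empty_iff.mpr fun a ha hbox => h.not_ge ?_)
  rw [← Int.toNat_of_nonneg (not_lt.mp hR), ← (mem_finsuppAntidiag.mp ha).1, Nat.cast_sum]
  exact sum_le_sum fun i hi => by have := hbox i hi; omega

theorem boxCount_eq_zero_of_eq_zero {j : ι} (hj : j ∈ s) (h : e j = 0) (R : ℤ) :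
    boxCount s e R = 0 := by
  rw [boxCount]
  split_ifs
  · rfl
  exact card_eq_zero.mpr (filter_eq_empty_iff.mpr fun a _ hbox => by have := hbox j hj; omega)

theorem card_finsuppAntidiag_filter_lt_eq_of_add_eq (he : ∀ i ∈ s, 1 ≤ e i) {r r' : ℕ}
    (hrr : r + r' = ∑ i ∈ s, (e i - 1)) :
    #{a ∈ s.finsuppAntidiag r | ∀ i ∈ s, a i < e i} =
      #{a ∈ s.finsuppAntidiag r' | ∀ i ∈ s, a i < e i} := by
  set γ : ι →₀ ℕ := Finsupp.indicator s fun i _ => e i - 1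
  have hγ : ∀ i, γ i = if i ∈ s then e i - 1 else 0 := fun i => by
    simp [γ, Finsupp.indicator_apply]
  have hle : ∀ {r a}, a ∈ {a ∈ s.finsuppAntidiag r | ∀ i ∈ s, a i < e i} → a ≤ γ := by
    intro r a ha i
    simp only [mem_filter, mem_finsuppAntidiag] at ha
    rw [hγ]
    split_ifs with hi
    · have := ha.2 i hi; omega
    · exact (Finsupp.notMem_support_iff.mp fun h => hi (ha.1.2 h)).le
  have hmaps : ∀ {r r'}, r + r' = ∑ i ∈ s, (e i - 1) → ∀ a,
      a ∈ {a ∈ s.finsuppAntidiag r | ∀ i ∈ s, a i < e i} →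
      γ - a ∈ {a ∈ s.finsuppAntidiag r' | ∀ i ∈ s, a i < e i} := by
    intro r r' hrr a ha
    have haγ := hle ha
    simp only [mem_filter, mem_finsuppAntidiag] at ha ⊢
    refine ⟨⟨?_, Finsupp.support_tsub.trans (Finsupp.support_indicator_subset _ _)⟩, ?_⟩
    · show ∑ i ∈ s, (γ i - a i) = r'
      rw [sum_tsub_distrib _ fun i _ => haγ i, ha.1.1,
        sum_congr rfl fun i hi => by rw [hγ, if_pos hi]]
      omega
    · intro i hi
      have := he i hi
      rw [Finsupp.tsub_apply, hγ, if_pos hi]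
      omega
  exact card_nbij' (γ - ·) (γ - ·) (fun a ha => hmaps hrr a ha)
    (fun a ha => hmaps (by omega) a ha) (fun a ha => tsub_tsub_cancel_of_le (hle ha))
    (fun a ha => tsub_tsub_cancel_of_le (hle ha))

theorem boxCount_reflect (he : ∀ i ∈ s, 1 ≤ e i) (R : ℤ) :
    boxCount s e (∑ i ∈ s, ((e i : ℤ) - 1) - R) = boxCount s e R := by
  have hc : ∑ i ∈ s, ((e i : ℤ) - 1) = ((∑ i ∈ s, (e i - 1) : ℕ) : ℤ) := by
    rw [Nat.cast_sum]
    exact sum_congr rfl fun i hi => by have := he i hi; omega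
  rcases lt_or_ge R 0 with hR | hR
  · rw [boxCount_eq_zero_of_lt (by omega), boxCount, if_pos hR]
  rcases lt_or_ge (∑ i ∈ s, ((e i : ℤ) - 1)) R with hRc | hRc
  · rw [boxCount_eq_zero_of_lt hRc, boxCount, if_pos (by omega)]
  lift R to ℕ using hR
  rw [boxCount, boxCount, if_neg (by omega), if_neg (by omega), Int.toNat_natCast]
  refine card_finsuppAntidiag_filter_lt_eq_of_add_eq he ?_
  omega

end LatticePoints

theorem binomZ_kIdx (n d : ℕ) (m : ℕ → ℕ) (I : Finset ℕ) :
    binomZ (n + kIdx d m I - #I) n = binomZ (n + d - ∑ i ∈ I, ((d : ℤ) + 1 - m i)) n := by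
  have harg : (n : ℤ) + d - ∑ i ∈ I, ((d : ℤ) + 1 - m i) =
      n + ((∑ i ∈ I, (m i : ℤ)) - (#I - 1) * d) - #I := by
    rw [sum_sub_distrib, sum_const, nsmul_eq_mul]
    ring
  rw [harg, kIdx]
  rcases le_or_gt 0 ((∑ i ∈ I, (m i : ℤ)) - (#I - 1) * d) with h | h
  · rw [max_eq_left h]
  · rw [max_eq_right h.le]
    have hI : I.Nonempty := nonempty_iff_ne_empty.mpr fun hI => by
      subst hI
      simp only [sum_empty, card_empty, CharP.cast_eq_zero, zero_sub, Int.reduceNeg, neg_mul,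
        one_mul, sub_neg_eq_add, zero_add] at h
      omega
    have : (0 : ℤ) < #I := by exact_mod_cast hI.card_pos
    rw [binomZ_eq_zero_of_lt (by omega), binomZ_eq_zero_of_lt (by omega)]

theorem ldim_eq_boxCount_sub {n d : ℕ} {m : ℕ → ℕ} (hm : ∀ i < n + 2, m i ≤ d + 1) :
    ldim n d (n + 2) m = boxCount (range (n + 1)) (fun i => d + 1 - m i) d -
      boxCount (range (n + 1)) (fun i => d + 1 - m i) (m (n + 1) - 1) := by
  have hcast : ∀ i < n + 2, (((d + 1 - m i : ℕ) : ℤ)) = d + 1 - m i := fun i hi => by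
    have := hm i hi
    omega
  have hsum : ∀ t ∈ (range (n + 1)).powerset,
      ∑ i ∈ t, ((d : ℤ) + 1 - m i) = ∑ i ∈ t, (((d + 1 - m i : ℕ) : ℤ)) := fun t ht =>
    sum_congr rfl fun i hi => (hcast i (by grind)).symm
  rw [ldim, range_add_one, sum_powerset_insert notMem_range_self,
    ← sum_powerset_binomZ_eq_boxCount (card_range _),
    ← sum_powerset_binomZ_eq_boxCount (card_range _), sub_eq_add_neg, ← sum_neg_distrib]
  congr 1
  · refine sum_congr rfl fun t ht => ?_
    rw [binomZ_kIdx, hsum t ht]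
  · refine sum_congr rfl fun t ht => ?_
    have hτ : n + 1 ∉ t := fun h => by grind
    rw [binomZ_kIdx, card_insert_of_notMem hτ, sum_insert hτ, hsum t ht, pow_succ]
    ring_nf

theorem exists_eq_add_one_or_sum_sub_eq {n d : ℕ} {m : ℕ → ℕ} (hm : ∀ i < n + 2, m i ≤ d + 1)
    (hb : ((∑ i ∈ range (n + 2), (m i : ℤ)) - (n : ℤ) * d = 1) ∨
      (((∑ i ∈ range (n + 2), (m i : ℤ)) - (n : ℤ) * d ≤ 0) ∧ ∃ j < n + 2, m j = d + 1)) :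
    (∃ j < n + 2, m j = d + 1) ∨
      (∀ i < n + 2, m i ≤ d) ∧ ∑ i ∈ range (n + 1), ((d : ℤ) - m i) = d + m (n + 1) - 1 := by
  by_cases hj : ∃ j < n + 2, m j = d + 1
  · exact .inl hj
  push Not at hj
  have hb1 := hb.resolve_right fun h => (hj _ h.2.choose_spec.1 h.2.choose_spec.2)
  refine .inr ⟨fun i hi => by have := hm i hi; have := hj i hi; omega, ?_⟩
  rw [sum_range_succ] at hb1
  rw [sum_sub_distrib, sum_const, card_range, nsmul_eq_mul]
  push_cast
  linarith

theorem ldim_eq_zero {n d : ℕ} {m : ℕ → ℕ} (hm : ∀ i < n + 2, m i ≤ d + 1)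
    (hb : ((∑ i ∈ range (n + 2), (m i : ℤ)) - (n : ℤ) * d = 1) ∨
      (((∑ i ∈ range (n + 2), (m i : ℤ)) - (n : ℤ) * d ≤ 0) ∧ ∃ j < n + 2, m j = d + 1)) :
    ldim n d (n + 2) m = 0 := by
  rw [ldim_eq_boxCount_sub hm, sub_eq_zero]
  rcases exists_eq_add_one_or_sum_sub_eq hm hb with ⟨j, hj, hjd⟩ | ⟨hle, hsum⟩
  · rcases (by omega : j < n + 1 ∨ j = n + 1) with hj | rfl
    · have he : d + 1 - m j = 0 := by omega
      rw [boxCount_eq_zero_of_eq_zero (mem_range.mpr hj) he,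
        boxCount_eq_zero_of_eq_zero (mem_range.mpr hj) he]
    · rw [hjd]
      push_cast
      ring_nf
  · have he : ∀ i ∈ range (n + 1), 1 ≤ d + 1 - m i := fun i hi => by
      have := hle i (by grind)
      omega
    have hc : ∑ i ∈ range (n + 1), (((d + 1 - m i : ℕ) : ℤ) - 1) - d = m (n + 1) - 1 := by
      have hterm : ∀ i ∈ range (n + 1), ((d + 1 - m i : ℕ) : ℤ) - 1 = d - m i := fun i hi => by
        have := hle i (by grind)
        omega
      rw [sum_congr rfl hterm, hsum]
      ring
    rw [← boxCount_reflect he, hc]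

section WeightIdeal

variable {σ R : Type*} [CommSemiring R]

def weightGeIdeal (w : σ → ℕ) (t : ℕ) : Ideal (MvPolynomial σ R) where
  carrier := {f | ∀ b ∈ f.support, t ≤ Finsupp.weight w b}
  add_mem' {f g} hf hg b hb := by
    classical
    rcases mem_union.mp (support_add hb) with hb | hb
    exacts [hf b hb, hg b hb]
  zero_mem' b hb := by simp at hb
  smul_mem' c f hf b hb := by
    classical
    obtain ⟨b₁, -, b₂, hb₂, rfl⟩ := mem_add.mp (support_mul c f hb)
    rw [map_add]
    exact (hf b₂ hb₂).trans le_add_self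

variable {w : σ → ℕ}

theorem weightGeIdeal_mul_le (s t : ℕ) :
    (weightGeIdeal w s : Ideal (MvPolynomial σ R)) * weightGeIdeal w t ≤
      weightGeIdeal w (s + t) := by
  classical
  refine Ideal.mul_le.mpr fun f hf g hg b hb => ?_
  obtain ⟨b₁, hb₁, b₂, hb₂, rfl⟩ := mem_add.mp (support_mul f g hb)
  rw [map_add]
  exact add_le_add (hf b₁ hb₁) (hg b₂ hb₂)

theorem pow_le_weightGeIdeal {I : Ideal (MvPolynomial σ R)} (hI : I ≤ weightGeIdeal w 1) (t : ℕ) :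
    I ^ t ≤ weightGeIdeal w t := by
  induction t with
  | zero => exact fun f _ b _ => Nat.zero_le _
  | succ t ih => exact (pow_succ I t ▸ Ideal.mul_mono ih hI).trans (weightGeIdeal_mul_le t 1)

theorem MvPolynomial.IsWeightedHomogeneous.eq_zero_of_mem_weightGeIdeal {f : MvPolynomial σ R}
    {d t : ℕ} (hf : IsWeightedHomogeneous w f d) (h : f ∈ weightGeIdeal w t) (hdt : d < t) :
    f = 0 := by
  ext b
  by_contra hb
  have := h b (mem_support_iff.mpr hb)
  rw [hf hb] at this
  omega

end WeightIdeal

section PointIdeal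

theorem MvPolynomial.IsHomogeneous.exists_eq_single_of_mem_support {σ R : Type*} [CommSemiring R]
    {P : MvPolynomial σ R} (hP : P.IsHomogeneous 1) {b : σ →₀ ℕ} (hb : b ∈ P.support) :
    ∃ l, b = Finsupp.single l 1 := by
  have hdeg : b ∈ {d : σ →₀ ℕ | d.degree = 1} := by
    rw [Set.mem_ofPred_eq, Finsupp.degree_eq_weight_one]
    exact hP (mem_support_iff.mp hb)
  rw [← Finsupp.range_single_one] at hdeg
  obtain ⟨l, rfl⟩ := hdeg
  exact ⟨l, rfl⟩

theorem MvPolynomial.IsHomogeneous.eval_single_one {σ R : Type*} [CommSemiring R] [Fintype σ]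
    [DecidableEq σ] {P : MvPolynomial σ R} (hP : P.IsHomogeneous 1) (j : σ) :
    eval (Pi.single j 1) P = coeff (Finsupp.single j 1) P := by
  rw [eval_eq', sum_eq_single (Finsupp.single j 1)]
  · rw [prod_eq_one fun i _ => by by_cases h : i = j <;> simp [h], mul_one]
  · intro b hb hne
    obtain ⟨l, rfl⟩ := hP.exists_eq_single_of_mem_support hb
    have hl : l ≠ j := fun h => hne (h ▸ rfl)
    rw [prod_eq_zero (mem_univ l) (by simp [hl]), mul_zero]
  · intro h
    rw [notMem_support_iff.mp h, zero_mul]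

theorem MvPolynomial.IsHomogeneous.sum_eq_of_mem_support {σ R : Type*} [CommSemiring R]
    [Fintype σ] {F : MvPolynomial σ R} {d : ℕ} (hF : F.IsHomogeneous d) {b : σ →₀ ℕ}
    (hb : b ∈ F.support) :
    ∑ i, b i = d := by
  rw [← Finsupp.degree_eq_sum, Finsupp.degree_eq_weight_one]
  exact hF (mem_support_iff.mp hb)

variable {k : Type} [Field k] {N : ℕ}

theorem pointIdeal_le_weightGeIdeal_one (v : Fin N → k) :
    pointIdeal k N v ≤ weightGeIdeal 1 1 :=
  Ideal.span_le.mpr fun P hP _ hb =>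
    ((mem_homogeneousSubmodule 1 P).mp hP.1 (mem_support_iff.mp hb)).ge

/-- `Finsupp.weight (Function.update 1 j 0) b` is the degree of `x^b` in the variables other
than `x j`. -/
theorem pointIdeal_single_le_weightGeIdeal (j : Fin N) :
    pointIdeal k N (Pi.single j 1) ≤ weightGeIdeal (Function.update 1 j 0) 1 := by
  refine Ideal.span_le.mpr fun P ⟨hP, hPj⟩ b hb => ?_
  have hP := (mem_homogeneousSubmodule 1 P).mp hP
  obtain ⟨l, rfl⟩ := hP.exists_eq_single_of_mem_support hb
  have hl : l ≠ j := by
    rintro rfl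
    rw [hP.eval_single_one] at hPj
    exact mem_support_iff.mp hb hPj
  simp [Finsupp.weight_single, hl]

theorem pointIdeal_one_le_ker : pointIdeal k N 1 ≤ RingHom.ker (eval 1) :=
  Ideal.span_le.mpr fun _ hP => hP.2

theorem weight_update_one_add_apply {σ : Type*} [Fintype σ] [DecidableEq σ] (j : σ) (b : σ →₀ ℕ) :
    Finsupp.weight (Function.update 1 j 0) b + b j = ∑ i, b i := by
  rw [Finsupp.weight_eq_sum, ← Finset.add_sum_erase _ _ (mem_univ j),
    ← Finset.add_sum_erase _ _ (mem_univ j),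
    sum_congr rfl fun i hi => by rw [Function.update_of_ne (ne_of_mem_erase hi)]]
  simp [add_comm]

end PointIdeal

section Moments

theorem Derivation.apply_mem_pow_of_mem_pow_succ {R A : Type*} [CommSemiring R] [CommRing A]
    [Algebra R A] (D : Derivation R A A) (I : Ideal A) {t : ℕ} {x : A} (hx : x ∈ I ^ (t + 1)) :
    D x ∈ I ^ t := by
  induction t generalizing x with
  | zero => simp
  | succ t ih =>
    rw [pow_succ] at hx
    refine Submodule.mul_induction_on hx (fun y hy z hz => ?_) (fun y z hy hz => ?_)
    · rw [D.leibniz, smul_eq_mul, smul_eq_mul]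
      refine add_mem (Ideal.mul_mem_right _ _ hy) ?_
      rw [mul_comm, pow_succ]
      exact Ideal.mul_mem_mul (ih hy) hz
    · rw [map_add]
      exact add_mem hy hz

variable {σ k : Type*} [CommRing k]

theorem coeff_X_mul_pderiv (i : σ) (f : MvPolynomial σ k) (b : σ →₀ ℕ) :
    coeff b (X i * pderiv i f) = b i * coeff b f := by
  classical
  induction f using MvPolynomial.induction_on' with
  | add p q hp hq => rw [map_add, mul_add, coeff_add, coeff_add, hp, hq, mul_add]
  | monomial m r =>
    rw [X_mul_pderiv_monomial, coeff_smul, coeff_monomial]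
    split_ifs with h
    · rw [h, nsmul_eq_mul]
    · rw [smul_zero, mul_zero]

def momentSum (f : MvPolynomial σ k) : MvPolynomial σ k →ₗ[k] k :=
  ∑ b ∈ f.support, coeff b f • (aeval fun i => (b i : k)).toLinearMap

theorem momentSum_apply (f q : MvPolynomial σ k) :
    momentSum f q = ∑ b ∈ f.support, coeff b f * eval (fun i => (b i : k)) q := by
  simp [momentSum]

theorem momentSum_one (f : MvPolynomial σ k) : momentSum f 1 = eval 1 f := by
  rw [momentSum_apply, eval_eq]
  simp only [map_one, mul_one, Pi.one_apply, one_pow, prod_const_one]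

theorem momentSum_X_mul (f q : MvPolynomial σ k) (i : σ) :
    momentSum f (X i * q) = momentSum (X i * pderiv i f) q := by
  have hsupp : (X i * pderiv i f).support ⊆ f.support := fun b hb => by
    rw [mem_support_iff, coeff_X_mul_pderiv] at hb
    exact mem_support_iff.mpr (right_ne_zero_of_mul hb)
  rw [momentSum_apply, momentSum_apply, sum_subset hsupp fun b _ hb => by
    rw [notMem_support_iff.mp hb, zero_mul]]
  refine sum_congr rfl fun b _ => ?_
  rw [coeff_X_mul_pderiv, map_mul, eval_X]
  ring

theorem momentSum_monomial_eq_zero_of_mem_pow {t : ℕ} {f : MvPolynomial σ k}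
    (hf : f ∈ RingHom.ker (eval 1) ^ t) {β : σ →₀ ℕ} (hβ : β.degree < t) :
    momentSum f (monomial β 1) = 0 := by
  induction t generalizing β f with
  | zero => omega
  | succ t ih =>
    by_cases h0 : β = 0
    · rw [h0, ← C_apply, C_1, momentSum_one]
      exact Ideal.pow_le_self t.succ_ne_zero hf
    obtain ⟨i, hi⟩ : ∃ i, β i ≠ 0 := by
      by_contra! h
      exact h0 (Finsupp.ext h)
    obtain ⟨β', rfl⟩ : ∃ β', β = Finsupp.single i 1 + β' :=
      ⟨β - Finsupp.single i 1, (add_tsub_cancel_of_le (Finsupp.single_le_iff.mpr (by omega))).symm⟩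
    rw [monomial_single_add, pow_one, momentSum_X_mul]
    have hθf : X i * pderiv i f ∈ RingHom.ker (eval 1) ^ t :=
      Ideal.mul_mem_left _ _ ((pderiv i).apply_mem_pow_of_mem_pow_succ _ hf)
    refine ih hθf (β := β') ?_
    rw [map_add, Finsupp.degree_single] at hβ
    omega

theorem momentSum_eq_zero_of_mem_pow {t : ℕ} {f : MvPolynomial σ k}
    (hf : f ∈ RingHom.ker (eval 1) ^ t) {q : MvPolynomial σ k} (hq : q.totalDegree < t) :
    momentSum f q = 0 := by
  rw [q.as_sum, map_sum]
  refine sum_eq_zero fun β hβ => ?_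
  rw [← mul_one (coeff β q), ← smul_eq_mul, ← smul_monomial, map_smul,
    momentSum_monomial_eq_zero_of_mem_pow hf ((le_totalDegree hβ).trans_lt hq), smul_zero]

end Moments

section BoxPolynomial

variable {σ k : Type*} [CommRing k] [Fintype σ]

def descFactorialPoly (c a : σ → ℕ) : MvPolynomial σ k :=
  ∏ i, ∏ r ∈ range (a i), (C ((c i : k) - r) - X i)

theorem totalDegree_descFactorialPoly_le (c a : σ → ℕ) :
    (descFactorialPoly c a : MvPolynomial σ k).totalDegree ≤ ∑ i, a i := by
  refine (totalDegree_finsetProd _ _).trans (sum_le_sum fun i _ => ?_)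
  refine (totalDegree_finsetProd _ _).trans ?_
  have hX : (X i : MvPolynomial σ k).totalDegree ≤ 1 := by
    simpa [X] using totalDegree_monomial_le (Finsupp.single i 1) (1 : k)
  have hfactor : ∀ r : ℕ, (C ((c i : k) - r) - X i).totalDegree ≤ 1 := fun r =>
    (totalDegree_sub _ _).trans (max_le (by rw [totalDegree_C]; omega) hX)
  refine (sum_le_sum fun r _ => hfactor r).trans ?_
  rw [sum_const, card_range, smul_eq_mul, mul_one]

theorem eval_descFactorialPoly {c b : σ → ℕ} (hb : ∀ i, b i ≤ c i) (a : σ → ℕ) :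
    eval (fun i => (b i : k)) (descFactorialPoly c a) =
      ∏ i, ((c i - b i).descFactorial (a i) : k) := by
  simp only [descFactorialPoly, map_prod, map_sub, eval_C, eval_X]
  refine prod_congr rfl fun i _ => ?_
  rw [← descPochhammer_eval_eq_descFactorial, descPochhammer_eval_eq_prod_range,
    Nat.cast_sub (hb i)]
  exact prod_congr rfl fun r _ => by ring

end BoxPolynomial

theorem eq_zero_of_support_le_of_mem_pow {σ k : Type*} [CommRing k] [IsDomain k] [CharZero k]
    [Fintype σ] {F : MvPolynomial σ k} {d t : ℕ} {c : σ → ℕ} (hF : F.IsHomogeneous d)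
    (hbox : ∀ b ∈ F.support, ∀ i, b i ≤ c i) (hc : ∑ i, c i < d + t)
    (hmult : F ∈ RingHom.ker (eval 1) ^ t) : F = 0 := by
  ext b₀
  rw [coeff_zero]
  by_contra hb₀
  have hb₀F : b₀ ∈ F.support := mem_support_iff.mpr hb₀
  set a : σ → ℕ := fun i => c i - b₀ i
  have ha : ∑ i, a i + d = ∑ i, c i := by
    rw [← hF.sum_eq_of_mem_support hb₀F, ← sum_add_distrib]
    exact sum_congr rfl fun i _ => Nat.sub_add_cancel (hbox b₀ hb₀F i)
  have hvanish := momentSum_eq_zero_of_mem_pow hmult (q := descFactorialPoly c a)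
    ((totalDegree_descFactorialPoly_le c a).trans_lt (by omega))
  rw [momentSum_apply, sum_eq_single b₀] at hvanish
  · rw [eval_descFactorialPoly (hbox b₀ hb₀F)] at hvanish
    simp [a, Nat.descFactorial_self, prod_eq_zero_iff, Nat.factorial_ne_zero, hb₀] at hvanish
  · -- a nonzero term forces `b ≤ b₀`, and `b`, `b₀` both have degree `d`
    intro b hb hne
    rw [eval_descFactorialPoly (hbox b hb), prod_eq_zero_iff.mpr, mul_zero]
    by_contra! h
    have hle : ∀ i ∈ univ, b i ≤ b₀ i := fun i _ => by
      have := Nat.descFactorial_eq_zero_iff_lt.not.mp (Nat.cast_ne_zero.mp (h i (mem_univ i)))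
      have := hbox b hb i
      have : a i = c i - b₀ i := rfl
      omega
    have hsum : ∑ i, b i = ∑ i, b₀ i := by
      rw [hF.sum_eq_of_mem_support hb, hF.sum_eq_of_mem_support hb₀F]
    exact hne (Finsupp.ext fun i => (sum_eq_sum_iff_of_le hle).mp hsum i (mem_univ i))
  · exact fun h => absurd hb₀F h

section GeneralPosition

variable {k : Type} [Field k] {n : ℕ}

theorem genCfg_val (j : Fin (n + 1)) : genCfg k n j = Pi.single j 1 := by
  funext l
  simp [genCfg, Pi.single_apply, Fin.ext_iff, eq_comm, j.is_lt.ne]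

theorem genCfg_last : genCfg k n (n + 1) = 1 := by
  funext l
  simp [genCfg]

theorem linSys_genCfg_eq_bot [CharZero k] {d : ℕ} {m : ℕ → ℕ} (hm : ∀ i < n + 2, m i ≤ d + 1)
    (hb : ((∑ i ∈ range (n + 2), (m i : ℤ)) - (n : ℤ) * d = 1) ∨
      (((∑ i ∈ range (n + 2), (m i : ℤ)) - (n : ℤ) * d ≤ 0) ∧ ∃ j < n + 2, m j = d + 1)) :
    linSys k n d (n + 2) m (genCfg k n) = ⊥ := by
  refine eq_bot_iff.mpr fun F hF => (Submodule.mem_bot k).mpr ?_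
  simp only [linSys, Submodule.mem_inf, Submodule.mem_iInf, Submodule.restrictScalars_mem,
    mem_range, mem_homogeneousSubmodule] at hF
  obtain ⟨hFd, hFm⟩ := hF
  rcases exists_eq_add_one_or_sum_sub_eq hm hb with ⟨j, hj, hjd⟩ | ⟨hle, hsum⟩
  · have hFj := pow_le_weightGeIdeal (pointIdeal_le_weightGeIdeal_one _) _ (hFm j hj)
    rw [hjd] at hFj
    exact IsWeightedHomogeneous.eq_zero_of_mem_weightGeIdeal hFd hFj (by omega)
  refine eq_zero_of_support_le_of_mem_pow (c := fun j : Fin (n + 1) => d - m j) (t := m (n + 1))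
    hFd ?_ ?_ ?_
  · intro b hb j
    have hFj := hFm j (by omega)
    rw [genCfg_val] at hFj
    have := pow_le_weightGeIdeal (pointIdeal_single_le_weightGeIdeal j) _ hFj b hb
    have := weight_update_one_add_apply j b
    have := hFd.sum_eq_of_mem_support hb
    omega
  · have hcast : ∀ j : Fin (n + 1), ((d - m j : ℕ) : ℤ) = d - m j := fun j => by
      have := hle j (by omega)
      omega
    have : ((∑ j : Fin (n + 1), (d - m j) : ℕ) : ℤ) = d + m (n + 1) - 1 := by
      rw [Nat.cast_sum, sum_congr rfl fun j _ => hcast j,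
        Fin.sum_univ_eq_sum_range (fun i => (d : ℤ) - m i), hsum]
    omega
  · have hFu := hFm (n + 1) (by omega)
    rw [genCfg_last] at hFu
    exact Ideal.pow_right_mono pointIdeal_one_le_ker _ hFu

end GeneralPosition

theorem stmt1_general (k : Type) [Field k] [CharZero k]
    (n d : ℕ) (m : ℕ → ℕ)
    (hm : ∀ i < n + 2, m i ≤ d + 1)
    (hb : ((∑ i ∈ Finset.range (n + 2), (m i : ℤ)) - (n : ℤ) * d = 1) ∨
      (((∑ i ∈ Finset.range (n + 2), (m i : ℤ)) - (n : ℤ) * d ≤ 0) ∧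
        ∃ j < n + 2, m j = d + 1)) :
    linSys k n d (n + 2) m (genCfg k n) = ⊥ ∧ ldim n d (n + 2) m = 0 :=
  ⟨linSys_genCfg_eq_bot hm hb, ldim_eq_zero hm hb⟩

/-- for these `n+2` points with `m_i ≤ d+1`, and either `b = 1`, or
`b ≤ 0` with some `m_j = d+1`, the linear system is zero and `ldim = 0`. -/
theorem stmt1 (k : Type) [Field k] [IsAlgClosed k] [CharZero k]
    (n d : ℕ) (hn : 2 ≤ n) (hd : 1 ≤ d) (m : ℕ → ℕ)
    (hm : ∀ i < n + 2, m i ≤ d + 1)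
    (hb : ((∑ i ∈ Finset.range (n + 2), (m i : ℤ)) - (n : ℤ) * d = 1) ∨
      (((∑ i ∈ Finset.range (n + 2), (m i : ℤ)) - (n : ℤ) * d ≤ 0) ∧
        ∃ j < n + 2, m j = d + 1)) :
    linSys k n d (n + 2) m (genCfg k n) = ⊥ ∧ ldim n d (n + 2) m = 0 :=
  stmt1_general k n d m hm hb

end
end

section
/- Let k be a field, let n ≥ 1 and a ≥ 1 be integers. The k-vector space of homogeneous polynomials F of degree a·n in k[x_1,…,x_{n+1}] such that, for every non-empty proper subset I ⊊ {1,…,n+1}, F lies in the ideal power (x_j : j ∉ I)^{a(n−|I|)} (i.e. F vanishes to order at least a(n−|I|) along the coordinate linear subspace spanned by the coordinate points indexed by I) has dimension binom(n+a, n). (This is the h^0-part of the theorem that the a-th multiple of the Cremona transform Cr_n(H) of the hyperplane class has the same cohomology as O_{ℙ^n}(a): h^0(a·Cr_n(H)) = h^0(ℙ^n, O(a)).) -/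
/-!
Homogeneity of degree `e'` and membership in a power `(x_j : j ∈ T)^e` of a monomial ideal are
both conditions on the individual exponents `m` occurring in a polynomial (`|m| = e'`, resp.
`e ≤ ∑_{j ∈ T} m_j`), so the space is spanned by the monomials `x^d` with `|d| = an` and
`∑_{j ∈ I} d_j ≤ a|I|` for every proper `I`; by the singletons, this just says `d_j ≤ a` for all
`j`. The reflection `d ↦ (a, …, a) - d` identifies these exponents with the exponents of total
degree `a`, of which there are `binom(n + a, n)`.
-/

open MvPolynomial Finset

noncomputable section

namespace MvPolynomial

variable {σ R : Type*} [CommSemiring R]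

theorem homogeneousSubmodule_eq_restrictSupport (n : ℕ) :
    homogeneousSubmodule σ R n = restrictSupport R {d | d.degree = n} :=
  homogeneousSubmodule_eq_finsupp_supported σ R n

theorem monomial_mem_pow_span_X_image {s : Finset σ} {e : ℕ} {m : σ →₀ ℕ}
    (h : e ≤ ∑ i ∈ s, m i) (r : R) :
    monomial m r ∈ Ideal.span (X '' (s : Set σ)) ^ e := by
  classical
  induction e generalizing m with
  | zero => simp
  | succ e ih =>
    obtain ⟨j, hj, hmj⟩ := exists_ne_zero_of_sum_ne_zero (by omega : ∑ i ∈ s, m i ≠ 0)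
    obtain ⟨m, rfl⟩ := le_iff_exists_add'.mp
      (Finsupp.single_le_iff.mpr (Nat.one_le_iff_ne_zero.mpr hmj))
    simp only [Finsupp.add_apply, sum_add_distrib, Finsupp.single_apply, sum_ite_eq, hj,
      if_true] at h
    rw [monomial_add_single, pow_one, pow_succ]
    exact Ideal.mul_mem_mul (ih (by omega)) (Ideal.subset_span ⟨j, hj, rfl⟩)

theorem le_sum_of_mem_pow_span_X_image {s : Finset σ} {e : ℕ} {p : MvPolynomial σ R}
    (hp : p ∈ Ideal.span (X '' (s : Set σ)) ^ e) : ∀ m ∈ p.support, e ≤ ∑ i ∈ s, m i := by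
  classical
  induction e generalizing p with
  | zero => simp
  | succ e ih =>
    rw [pow_succ] at hp
    refine Submodule.mul_induction_on hp (fun q hq r hr m hm => ?_) fun q r hq hr m hm => ?_
    · obtain ⟨mq, hmq, mr, hmr, rfl⟩ := mem_add.mp (support_mul q r hm)
      obtain ⟨i, hi, hmri⟩ := mem_ideal_span_X_image.mp hr mr hmr
      have hq' := ih hq mq hmq
      have hr' : 1 ≤ ∑ i ∈ s, mr i :=
        (Nat.one_le_iff_ne_zero.mpr hmri).trans (single_le_sum (by simp) hi)
      simp only [Finsupp.coe_add, Pi.add_apply, sum_add_distrib]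
      omega
    · rcases mem_union.mp (support_add hm) with h | h
      exacts [hq m h, hr m h]

theorem restrictScalars_pow_span_X_image (s : Finset σ) (e : ℕ) :
    (Ideal.span (X '' (s : Set σ)) ^ e).restrictScalars R =
      restrictSupport R {m | e ≤ ∑ i ∈ s, m i} := by
  ext p
  rw [Submodule.restrictScalars_mem, mem_restrictSupport_iff]
  refine ⟨fun hp m hm => le_sum_of_mem_pow_span_X_image hp m hm, fun hp => ?_⟩
  rw [p.as_sum]
  exact Ideal.sum_mem _ fun m hm => monomial_mem_pow_span_X_image (hp hm) _

theorem setOf_exists_notMem_eq_X_image [Fintype σ] [DecidableEq σ] (I : Finset σ) :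
    {P | ∃ j ∉ I, P = (X j : MvPolynomial σ R)} = X '' ↑Iᶜ := by
  ext P
  simp [eq_comm]

end MvPolynomial

/-- `H⁰(a·Cr_n(H))`, as a space of forms of degree `a·n` on `ℙⁿ`. -/
def cremonaSystem (k : Type) [Field k] (n a : ℕ) : Submodule k (MvPolynomial (Fin (n + 1)) k) :=
  (homogeneousSubmodule (Fin (n + 1)) k (a * n)) ⊓
    ⨅ (I : Finset (Fin (n + 1))) (_ : I.Nonempty) (_ : I ≠ Finset.univ),
      Submodule.restrictScalars k
        ((Ideal.span {P | ∃ j ∉ I, P = (X j : MvPolynomial (Fin (n + 1)) k)}) ^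
          (a * (n - I.card)))

def cremonaExponents (n a : ℕ) : Set (Fin (n + 1) →₀ ℕ) :=
  {d | d.degree = a * n ∧ ∀ j, d j ≤ a}

theorem forall_le_sum_compl_iff {n a : ℕ} (hn : 1 ≤ n) {d : Fin (n + 1) →₀ ℕ}
    (hd : d.degree = a * n) :
    (∀ I : Finset (Fin (n + 1)), I.Nonempty → I ≠ univ → a * (n - #I) ≤ ∑ j ∈ Iᶜ, d j) ↔
      ∀ j, d j ≤ a := by
  rw [Finsupp.degree_eq_sum] at hd
  constructor
  · intro h j
    have : Nontrivial (Fin (n + 1)) := Fin.nontrivial_iff_two_le.mpr (by omega)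
    have hj := h {j} (singleton_nonempty j) (singleton_ne_univ j)
    rw [card_singleton, Nat.mul_sub_one] at hj
    rw [← sum_compl_add_sum {j}, sum_singleton] at hd
    have : a ≤ a * n := Nat.le_mul_of_pos_right a hn
    omega
  · intro h I _ _
    have hI : ∑ j ∈ I, d j ≤ #I * a := by simpa using sum_le_card_nsmul I d a fun j _ => h j
    rw [← sum_compl_add_sum I] at hd
    rw [Nat.mul_sub, Nat.mul_comm a #I]
    omega

theorem cremonaSystem_eq_restrictSupport (k : Type) [Field k] {n : ℕ} (hn : 1 ≤ n) (a : ℕ) :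
    cremonaSystem k n a = restrictSupport k (cremonaExponents n a) := by
  ext p
  simp only [cremonaSystem, Submodule.mem_inf, Submodule.mem_iInf,
    homogeneousSubmodule_eq_restrictSupport, setOf_exists_notMem_eq_X_image,
    restrictScalars_pow_span_X_image, mem_restrictSupport_iff, Set.subset_def, mem_coe]
  constructor
  · rintro ⟨hdeg, hI⟩ d hd
    exact ⟨hdeg d hd, (forall_le_sum_compl_iff hn (hdeg d hd)).mp fun I h₁ h₂ => hI I h₁ h₂ d hd⟩
  · intro h
    exact ⟨fun d hd => (h d hd).1,
      fun I h₁ h₂ d hd => (forall_le_sum_compl_iff hn (h d hd).1).mpr (h d hd).2 I h₁ h₂⟩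

theorem card_cremonaExponents (n a : ℕ) :
    Nat.card (cremonaExponents n a) = (n + a).choose n := by
  let c : Fin (n + 1) →₀ ℕ := Finsupp.equivFunOnFinite.symm fun _ => a
  have degree_tsub {d : Fin (n + 1) →₀ ℕ} (hd : ∀ j, d j ≤ a) :
      (c - d).degree + d.degree = (n + 1) * a := by
    rw [← map_add, tsub_add_cancel_of_le (Finsupp.le_def.mpr hd)]
    simp [Finsupp.degree_eq_sum, c]
  have mem_antidiag {f : Fin (n + 1) →₀ ℕ} : f ∈ univ.finsuppAntidiag a ↔ f.degree = a := by
    simp [mem_finsuppAntidiag, Finsupp.degree_eq_sum]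
  have le_of_degree {f : Fin (n + 1) →₀ ℕ} (hf : f.degree = a) (j) : f j ≤ a :=
    hf ▸ Finsupp.degree_eq_sum f ▸ single_le_sum (fun _ _ => Nat.zero_le _) (mem_univ j)
  let reflect : cremonaExponents n a ≃ univ.finsuppAntidiag a :=
    { toFun d := ⟨c - d.1, mem_antidiag.mpr <| by
        have := degree_tsub d.2.2
        rw [d.2.1] at this
        linarith⟩
      invFun f := ⟨c - f.1, by
        have := degree_tsub (le_of_degree (mem_antidiag.mp f.2))
        rw [mem_antidiag.mp f.2] at this
        exact ⟨by linarith, fun j => tsub_le_self⟩⟩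
      left_inv d := Subtype.ext (tsub_tsub_cancel_of_le (Finsupp.le_def.mpr d.2.2))
      right_inv f := Subtype.ext (tsub_tsub_cancel_of_le
        (Finsupp.le_def.mpr (le_of_degree (mem_antidiag.mp f.2)))) }
  rw [Nat.card_congr reflect, Nat.card_eq_fintype_card, Fintype.card_coe,
    card_finsuppAntidiag_nat_eq_choose, card_univ, Fintype.card_fin,
    Nat.add_right_comm, Nat.add_sub_cancel, Nat.choose_symm_add]

theorem stmt5_general (k : Type) [Field k] (n a : ℕ) (hn : 1 ≤ n) :
    Module.finrank k ↥((homogeneousSubmodule (Fin (n + 1)) k (a * n)) ⊓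
      ⨅ (I : Finset (Fin (n + 1))) (_ : I.Nonempty) (_ : I ≠ Finset.univ),
        Submodule.restrictScalars k
          ((Ideal.span {P | ∃ j ∉ I, P = (X j : MvPolynomial (Fin (n + 1)) k)}) ^
            (a * (n - I.card))))
      = (n + a).choose n := by
  change Module.finrank k (cremonaSystem k n a) = _
  rw [cremonaSystem_eq_restrictSupport k hn,
    Module.finrank_eq_nat_card_basis (basisRestrictSupport k _), card_cremonaExponents]

/-- the space of degree-`a·n` forms lying in `(x_j : j ∉ I)^{a(n−|I|)}`
for every nonempty proper subset `I` of the variables has dimension `binom(n+a,n)`. -/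
theorem stmt5 (k : Type) [Field k] (n a : ℕ) (hn : 1 ≤ n) (ha : 1 ≤ a) :
    Module.finrank k ↥((homogeneousSubmodule (Fin (n + 1)) k (a * n)) ⊓
      ⨅ (I : Finset (Fin (n + 1))) (_ : I.Nonempty) (_ : I ≠ Finset.univ),
        Submodule.restrictScalars k
          ((Ideal.span {P | ∃ j ∉ I, P = (X j : MvPolynomial (Fin (n + 1)) k)}) ^
            (a * (n - I.card))))
      = (n + a).choose n :=
  stmt5_general k n a hn
end
end

section
/- Let n ≥ 1, d ≥ 1, 1 ≤ s ≤ n+1 be integers and let m_1,…,m_s be integers with 0 ≤ m_i ≤ d for all i and Σ_{i=1}^s m_i = nd. Then ℓ(n,d; m_1,…,m_s) = 1; that is, Σ_{I ⊆ {1,…,s}} (−1)^{|I|} · binom(n + k_I − |I|, n) = 1. (This is the identity χ(D̃) = ldim(D) = 1 for effective toric divisors lying on the face b = 0 of the effective cone.) -/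
open MvPolynomial Finset

noncomputable section

/-! ### Auxiliary counting lemmas -/

lemma card_adt (k e : ℕ) :
    (Finset.Nat.antidiagonalTuple (k+1) e).card = (e + k).choose k := by
  induction k generalizing e with
  | zero => simp [Finset.Nat.antidiagonalTuple_one]
  | succ k ih =>
      have h : (Finset.Nat.antidiagonalTuple (k+1+1) e).card
          = ∑ i ∈ range (e+1), (Finset.Nat.antidiagonalTuple (k+1) (e - i)).card := by
        show (List.Nat.antidiagonalTuple (k+1+1) e).length = _
        rw [List.Nat.antidiagonalTuple, List.length_flatMap, List.Nat.antidiagonal, List.map_map]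
        simp only [Function.comp_def, List.length_map]
        rfl
      rw [h]
      have h1 : ∀ i ∈ range (e+1), (Finset.Nat.antidiagonalTuple (k+1) (e - i)).card
          = (e + 1 - 1 - i + k).choose k := by
        intro i _; rw [ih (e - i)]; norm_num
      have hr := Finset.sum_range_reflect (fun j => (j + k).choose k) (e+1)
      rw [Finset.sum_congr rfl h1, hr]
      have h4 : ∑ j ∈ range (e + 1), (j + k).choose k
          = ∑ m ∈ Icc k (e + k), m.choose k := by
        rw [← Finset.Ico_add_one_right_eq_Icc, Finset.sum_Ico_eq_sum_range]
        have : e + k + 1 - k = e + 1 := by omega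
        rw [this]
        exact Finset.sum_congr rfl fun i _ => by rw [Nat.add_comm k i]
      rw [h4, Nat.sum_Icc_choose, Nat.add_assoc]

lemma card_shift (k e : ℕ) (c : Fin k → ℕ) :
    ((Finset.Nat.antidiagonalTuple k e).filter (fun f => ∀ i, c i ≤ f i)).card
      = if (∑ i, c i) ≤ e then (Finset.Nat.antidiagonalTuple k (e - ∑ i, c i)).card else 0 := by
  split_ifs with h
  · apply Finset.card_bij' (fun f _ => f - c) (fun g _ => g + c)
    · intro f hf
      simp only [Finset.mem_filter, Finset.Nat.mem_antidiagonalTuple] at hf ⊢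
      obtain ⟨hsum, hle⟩ := hf
      rw [← hsum]
      have : ∀ i ∈ (univ : Finset (Fin k)), (f - c) i = f i - c i := fun i _ => rfl
      rw [Finset.sum_congr rfl this, Finset.sum_tsub_distrib _ (fun i _ => hle i)]
    · intro g hg
      simp only [Finset.Nat.mem_antidiagonalTuple] at hg
      simp only [Finset.mem_filter, Finset.Nat.mem_antidiagonalTuple]
      constructor
      · have : ∀ i ∈ (univ : Finset (Fin k)), (g + c) i = g i + c i := fun i _ => rfl
        rw [Finset.sum_congr rfl this, Finset.sum_add_distrib, hg]
        omega
      · intro i; simp [Pi.add_apply]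
    · intro f hf
      simp only [Finset.mem_filter] at hf
      funext i
      simp [Nat.sub_add_cancel (hf.2 i)]
    · intro g _
      funext i
      simp
  · rw [Finset.card_eq_zero, Finset.filter_eq_empty_iff]
    intro f hf
    rw [Finset.Nat.mem_antidiagonalTuple] at hf
    intro hall
    exact h (hf ▸ Finset.sum_le_sum (fun i _ => hall i))

lemma card_filter_int {α : Type*} (s : Finset α) (p : α → Prop) [DecidablePred p] :
    ((s.filter p).card : ℤ) = ∑ a ∈ s, if p a then (1:ℤ) else 0 := by
  rw [Finset.card_filter, Nat.cast_sum]
  exact Finset.sum_congr rfl fun a _ => by split_ifs <;> simp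

lemma perI (n d s : ℕ) (hs2 : s ≤ n + 1) (m : ℕ → ℕ) (hm : ∀ i < s, m i ≤ d)
    (I : Finset ℕ) (hI : I ⊆ Finset.range s) :
    binomZ ((n : ℤ) + kIdx d m I - (I.card : ℤ)) n
      = (((Finset.Nat.antidiagonalTuple (n+1) d).filter
          (fun f => ∀ i : Fin (n+1), (if (i:ℕ) ∈ I then d + 1 - m i else 0) ≤ f i)).card : ℤ) := by
  have hmI : ∀ j ∈ I, m j ≤ d := fun j hj => hm j (mem_range.1 (hI hj))
  set c : Fin (n+1) → ℕ := fun i => if (i:ℕ) ∈ I then d + 1 - m i else 0 with hc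
  have hu : ∑ i : Fin (n+1), c i = ∑ j ∈ I, (d + 1 - m j) := by
    rw [hc, Fin.sum_univ_eq_sum_range (fun j => if j ∈ I then d + 1 - m j else 0) (n+1),
      Finset.sum_ite_mem, Finset.inter_eq_right.mpr (hI.trans (range_subset_range.mpr hs2))]
  have huz : ((∑ i : Fin (n+1), c i : ℕ) : ℤ)
      = (I.card : ℤ) * (d + 1) - ∑ j ∈ I, (m j : ℤ) := by
    rw [hu, Nat.cast_sum,
      Finset.sum_congr rfl (fun j hj => by
        have := hmI j hj
        omega : ∀ j ∈ I, ((d + 1 - m j : ℕ) : ℤ) = (d : ℤ) + 1 - (m j : ℤ)),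
      Finset.sum_sub_distrib, Finset.sum_const, nsmul_eq_mul]
  rw [card_shift]
  set u := ∑ i : Fin (n+1), c i with hudef
  have hkv : (∑ j ∈ I, (m j : ℤ)) - ((I.card : ℤ) - 1) * d = (I.card : ℤ) + d - u := by
    linarith [huz]
  by_cases hud : u ≤ d
  · rw [if_pos hud, card_adt]
    have hk : kIdx d m I = (I.card : ℤ) + d - u := by
      rw [kIdx, hkv, max_eq_left (by omega)]
    rw [hk, binomZ, if_neg (by omega)]
    have ht : ((n:ℤ) + ((I.card:ℤ) + d - u) - I.card).toNat = d - u + n := by omega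
    rw [ht]
  · rw [if_neg hud]
    have hc1 : 1 ≤ I.card := by
      rcases Nat.eq_zero_or_pos I.card with h | h
      · exfalso
        have : I = ∅ := Finset.card_eq_zero.1 h
        subst this
        simp at huz
        omega
      · exact h
    have hk : kIdx d m I < (I.card : ℤ) := by
      rw [kIdx, hkv]
      apply max_lt <;> omega
    rw [binomZ, if_pos (by omega)]
    simp


/-- for `s ≤ n+1`, `m_i ≤ d`, and sum of multiplicities equal to `nd`,
the linear virtual dimension is `1`. -/
theorem stmt6 (n d s : ℕ) (hn : 1 ≤ n) (hd : 1 ≤ d) (hs1 : 1 ≤ s) (hs2 : s ≤ n + 1)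
    (m : ℕ → ℕ) (hm : ∀ i < s, m i ≤ d)
    (hb : ∑ i ∈ Finset.range s, m i = n * d) :
    ldim n d s m = 1 := by
  classical
  have hns : n ≤ s := by
    have h1 : n * d ≤ s * d := by
      rw [← hb]
      calc ∑ i ∈ range s, m i ≤ ∑ i ∈ range s, d :=
            Finset.sum_le_sum fun i hi => hm i (mem_range.1 hi)
        _ = s * d := by rw [Finset.sum_const, card_range, smul_eq_mul]
    exact Nat.le_of_mul_le_mul_right h1 hd
  set f0 : Fin (n+1) → ℕ := fun i => if (i:ℕ) < s then d - m i else d with hf0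
  have hsum_dm : (∑ j ∈ range s, (d - m j)) + n * d = s * d := by
    rw [← hb, ← Finset.sum_add_distrib,
      Finset.sum_congr rfl (fun j hj => Nat.sub_add_cancel (hm j (mem_range.1 hj))),
      Finset.sum_const, card_range, smul_eq_mul]
  have hf0sum : ∑ i : Fin (n+1), f0 i = d := by
    rw [hf0, Fin.sum_univ_eq_sum_range (fun j => if j < s then d - m j else d) (n+1),
      ← Finset.sum_range_add_sum_Ico _ hs2,
      Finset.sum_congr rfl (fun j hj => if_pos (mem_range.1 hj))]
    have e2 : ∑ j ∈ Ico s (n+1), (if j < s then d - m j else d) = (n+1-s) * d := by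
      rw [Finset.sum_congr rfl
        (fun j hj => if_neg (by have := (mem_Ico.1 hj).1; omega))]
      rw [Finset.sum_const, Nat.card_Ico, smul_eq_mul]
    rw [e2]
    have hcase : s = n ∨ s = n + 1 := by omega
    rcases hcase with h | h
    · rw [h] at hsum_dm ⊢
      have h0 : ∑ j ∈ range n, (d - m j) = 0 :=
        Nat.add_right_cancel (hsum_dm.trans (zero_add _).symm)
      rw [h0]
      have : n + 1 - n = 1 := by omega
      rw [this, zero_add, one_mul]
    · rw [h] at hsum_dm ⊢
      have h1 : (∑ j ∈ range (n+1), (d - m j)) + n * d = d + n * d := by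
        rw [hsum_dm]; ring
      rw [Nat.sub_self, zero_mul, add_zero]
      exact Nat.add_right_cancel h1
  set B : (Fin (n+1) → ℕ) → Finset ℕ :=
    fun f => (range s).filter (fun j => ∀ h : j < n + 1, d + 1 - m j ≤ f ⟨j, h⟩) with hB
  have hBsub : ∀ f, B f ⊆ range s := fun f => Finset.filter_subset _ _
  have main : ldim n d s m
      = (((Finset.Nat.antidiagonalTuple (n+1) d).filter (fun f => B f = ∅)).card : ℤ) := by
    rw [ldim,
      Finset.sum_congr rfl (fun I hI => by
        rw [perI n d s hs2 m hm I (Finset.mem_powerset.1 hI), card_filter_int]),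
      ]
    simp_rw [Finset.mul_sum]
    rw [Finset.sum_comm]
    have hinner : ∀ f ∈ Finset.Nat.antidiagonalTuple (n+1) d,
        (∑ I ∈ (range s).powerset,
          (-1:ℤ) ^ I.card * (if ∀ i : Fin (n+1), (if (i:ℕ) ∈ I then d + 1 - m i else 0) ≤ f i then 1 else 0))
        = if B f = ∅ then (1:ℤ) else 0 := by
      intro f _
      have hPB : ∀ I ∈ (range s).powerset,
          ((∀ i : Fin (n+1), (if (i:ℕ) ∈ I then d + 1 - m i else 0) ≤ f i) ↔ I ⊆ B f) := by
        intro I hI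
        rw [Finset.mem_powerset] at hI
        constructor
        · intro hP j hj
          have hjs : j < s := mem_range.1 (hI hj)
          have hjn : j < n + 1 := lt_of_lt_of_le hjs hs2
          rw [hB]
          refine Finset.mem_filter.2 ⟨Finset.mem_range.2 hjs, fun h => ?_⟩
          have h2 := hP ⟨j, h⟩
          simpa [hj] using h2
        · intro hsub i
          by_cases hi : (i:ℕ) ∈ I
          · rw [if_pos hi]
            have h3 := hsub hi
            rw [hB, Finset.mem_filter] at h3
            have h4 := h3.2 i.isLt
            simpa using h4
          · rw [if_neg hi]
            exact Nat.zero_le _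
      rw [Finset.sum_congr rfl (fun I hI => by
        rw [if_congr (hPB I hI) rfl rfl])]
      simp_rw [mul_ite, mul_one, mul_zero]
      rw [← Finset.sum_filter]
      have hps : (range s).powerset.filter (· ⊆ B f) = (B f).powerset := by
        ext J
        simp only [Finset.mem_filter, Finset.mem_powerset]
        exact ⟨fun h => h.2, fun h => ⟨h.trans (hBsub f), h⟩⟩
      rw [hps, Finset.sum_powerset_neg_one_pow_card]
    rw [Finset.sum_congr rfl hinner, ← card_filter_int]
  have key : (Finset.Nat.antidiagonalTuple (n+1) d).filter (fun f => B f = ∅) = {f0} := by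
    ext f
    simp only [Finset.mem_filter, Finset.mem_singleton, Finset.Nat.mem_antidiagonalTuple]
    constructor
    · rintro ⟨hfs, hBf⟩
      have hub : ∀ i : Fin (n+1), f i ≤ f0 i := by
        intro i
        by_cases his : (i:ℕ) < s
        · have hmem : (i:ℕ) ∈ range s := Finset.mem_range.2 his
          have h2 : (i:ℕ) ∉ B f := by rw [hBf]; exact Finset.notMem_empty _
          rw [hB, Finset.mem_filter] at h2
          push_neg at h2
          obtain ⟨hlt, h4⟩ := h2 hmem
          simp only [Fin.eta] at h4
          simp only [hf0]
          rw [if_pos his]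
          have := hm i his
          omega
        · have hled : f i ≤ d :=
            hfs ▸ Finset.single_le_sum (f := fun j => f j) (fun j _ => Nat.zero_le _)
              (Finset.mem_univ i)
          simp only [hf0]
          rw [if_neg his]
          exact hled
      have heq := (Finset.sum_eq_sum_iff_of_le (fun i _ => hub i)).1 (by rw [hfs, hf0sum])
      funext i
      exact heq i (Finset.mem_univ i)
    · rintro rfl
      refine ⟨hf0sum, ?_⟩
      rw [hB, Finset.filter_eq_empty_iff]
      intro j hj
      have hjs := Finset.mem_range.1 hj
      intro hcon
      have h5 := hcon (lt_of_lt_of_le hjs hs2)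
      simp only [hf0, Fin.val_mk] at h5
      rw [if_pos hjs] at h5
      have := hm j hjs
      omega
  rw [main, key, Finset.card_singleton]
  rfl
end
end

section
/- Let n ≥ 1, d ≥ 0, 0 ≤ s ≤ n+1 be integers and let m_1,…,m_s be integers with 0 ≤ m_i ≤ d+1 for all i. Assume the corresponding toric divisor is non-effective, i.e. Σ_{i=1}^s m_i > nd or m_i = d+1 for some i. Then ℓ(n,d; m_1,…,m_s) = 0; that is, Σ_{I ⊆ {1,…,s}} (−1)^{|I|} · binom(n + k_I − |I|, n) = 0. (This is the identity ldim(D) = 0 for non-effective toric divisors with multiplicities bounded by d+1.) -/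
open MvPolynomial Finset

noncomputable section

/-!
By stars and bars, `binom(n + k_I - |I|, n)` is the number of exponent vectors `a` of degree `d`
in `x_0, …, x_n` with `a_i ≥ d + 1 - m_i` for all `i ∈ I` (both sides vanish when
`Σ_{i ∈ I} (d + 1 - m_i) > d`). Inclusion–exclusion therefore identifies `ℓ(n,d;m)` with the
number of degree-`d` monomials `x^a` with `a_i + m_i ≤ d` for all `i < s`. For a non-effective
divisor there is no such monomial: `m_i = d + 1` would force `a_i < 0`, and summing
`a_i + m_i ≤ d` over `i < s` together with `a_i ≤ d` for `s ≤ i ≤ n` gives `Σ m_i ≤ nd`.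
-/

section

variable {ι : Type*} [DecidableEq ι]

theorem card_piAntidiag_nat (s : Finset ι) (e : ℕ) :
    #(piAntidiag s e) = (#s + e - 1).choose e := by
  rw [← card_finsuppAntidiag_nat_eq_choose]
  simp [finsuppAntidiag]

theorem card_filter_forall_le_piAntidiag {s I : Finset ι} (hI : I ⊆ s) (w : ι → ℕ) (e : ℕ) :
    #{a ∈ piAntidiag s e | ∀ i ∈ I, w i ≤ a i} =
      if ∑ i ∈ I, w i ≤ e then #(piAntidiag s (e - ∑ i ∈ I, w i)) else 0 := by
  set v : ι → ℕ := fun i => if i ∈ I then w i else 0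
  have hv : ∑ i ∈ s, v i = ∑ i ∈ I, w i := by
    simp only [v, sum_ite_mem, inter_eq_right.2 hI]
  have hle : ∀ a : ι → ℕ, (∀ i ∈ I, w i ≤ a i) → v ≤ a := fun a ha i => by
    by_cases hi : i ∈ I <;> simp [v, hi, ha]
  split_ifs with h
  · refine card_nbij' (· - v) (· + v) (fun a ha => ?_) (fun b hb => ?_) (fun a ha => ?_)
      (fun b _ => by simp)
    · simp only [coe_filter, Set.mem_ofPred_eq, mem_piAntidiag] at ha
      simp only [mem_coe, mem_piAntidiag, Pi.sub_apply]
      refine ⟨?_, fun i hi => ha.1.2 i (by omega)⟩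
      rw [sum_tsub_distrib _ fun i _ => hle a ha.2 i, ha.1.1, hv]
    · simp only [mem_coe, mem_piAntidiag] at hb
      simp only [coe_filter, Set.mem_ofPred_eq, mem_piAntidiag, Pi.add_apply]
      refine ⟨⟨by rw [sum_add_distrib, hb.1, hv]; omega, fun i hi => ?_⟩,
        fun i hi => by simp [v, hi]⟩
      by_cases hiI : i ∈ I
      · exact hI hiI
      · exact hb.2 i (by simpa [v, hiI] using hi)
    · simp only [coe_filter, Set.mem_ofPred_eq] at ha
      exact tsub_add_cancel_of_le (hle a ha.2)
  · rw [card_eq_zero, filter_eq_empty_iff]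
    intro a ha hwa
    rw [mem_piAntidiag] at ha
    exact h (ha.1 ▸ (sum_le_sum hwa).trans (sum_le_sum_of_subset hI))

theorem sum_powerset_neg_one_pow_mul_card_filter {α : Type*} (A : Finset α)
    (U : Finset ι) (P : ι → α → Prop) [∀ i, DecidablePred (P i)] :
    ∑ I ∈ U.powerset, (-1 : ℤ) ^ #I * #{a ∈ A | ∀ i ∈ I, P i a} =
      #{a ∈ A | ∀ i ∈ U, ¬ P i a} := by
  simp only [card_filter, Nat.cast_sum, mul_sum, Nat.cast_ite, Nat.cast_one, Nat.cast_zero,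
    mul_ite, mul_one, mul_zero]
  rw [sum_comm]
  refine sum_congr rfl fun a _ => ?_
  have hsub : ∀ I ∈ U.powerset, (∀ i ∈ I, P i a) ↔ I ∈ {i ∈ U | P i a}.powerset := by
    intro I hI
    simp only [mem_powerset] at hI ⊢
    exact ⟨fun h i hi => mem_filter.2 ⟨hI hi, h i hi⟩, fun h i hi => (mem_filter.1 (h hi)).2⟩
  rw [sum_congr rfl fun I hI => if_congr (hsub I hI) rfl rfl, sum_ite_mem,
    inter_eq_right.2 (powerset_mono.2 (filter_subset _ _)), sum_powerset_neg_one_pow_card]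
  exact if_congr filter_eq_empty_iff rfl rfl

end

/-- `x^a` vanishes to order `d - a i` at the `i`-th coordinate point, so these are the
monomials spanning the toric linear system `L_{n,d}(m_1,…,m_s)`. -/
def toricMonomials (n d s : ℕ) (m : ℕ → ℕ) : Finset (ℕ → ℕ) :=
  {a ∈ piAntidiag (range (n + 1)) d | ∀ i ∈ range s, a i + m i ≤ d}

theorem binomZ_kIdx_eq_card_filter_piAntidiag {n d : ℕ} {m : ℕ → ℕ} {I : Finset ℕ}
    (hI : I ⊆ range (n + 1)) (hm : ∀ i ∈ I, m i ≤ d + 1) :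
    binomZ (n + kIdx d m I - #I) n =
      #{a ∈ piAntidiag (range (n + 1)) d | ∀ i ∈ I, d + 1 - m i ≤ a i} := by
  rw [card_filter_forall_le_piAntidiag hI, card_piAntidiag_nat, card_range]
  set c := ∑ i ∈ I, (d + 1 - m i)
  have hc : (c : ℤ) + ∑ i ∈ I, (m i : ℤ) = #I * d + #I := by
    have hterm : ∀ i ∈ I, ((d + 1 - m i : ℕ) : ℤ) + m i = d + 1 := fun i hi => by
      have := hm i hi; omega
    rw [Nat.cast_sum, ← sum_add_distrib, sum_congr rfl hterm, sum_const, nsmul_eq_mul]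
    ring
  have hk : ∑ i ∈ I, (m i : ℤ) - (#I - 1) * d = d - c + #I := by linear_combination hc
  have hempty : #I = 0 → c = 0 := fun h => by simp [c, card_eq_zero.1 h]
  rw [binomZ, kIdx, hk]
  split_ifs with hlt hcd hcd
  · omega
  · rfl
  · rw [show (n + 1 + (d - c) - 1) = n + (d - c) by omega, ← Nat.choose_symm_add]
    congr
    omega
  · omega

theorem ldim_eq_card_toricMonomials {n d s : ℕ} {m : ℕ → ℕ} (hs : s ≤ n + 1)
    (hm : ∀ i < s, m i ≤ d + 1) : ldim n d s m = #(toricMonomials n d s m) := by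
  have hsummand : ∀ I ∈ (range s).powerset, binomZ (n + kIdx d m I - #I) n =
      #{a ∈ piAntidiag (range (n + 1)) d | ∀ i ∈ I, d + 1 - m i ≤ a i} := fun I hI => by
    have hIs := mem_powerset.1 hI
    exact binomZ_kIdx_eq_card_filter_piAntidiag (hIs.trans (range_subset_range.2 hs))
      fun i hi => hm i (mem_range.1 (hIs hi))
  rw [ldim, sum_congr rfl fun I hI => by rw [hsummand I hI],
    sum_powerset_neg_one_pow_mul_card_filter, toricMonomials]
  congr 2
  refine filter_congr fun a _ => forall₂_congr fun i _ => ?_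
  omega

theorem toricMonomials_eq_empty {n d s : ℕ} {m : ℕ → ℕ} (hs : s ≤ n + 1)
    (hne : n * d < ∑ i ∈ range s, m i ∨ ∃ i < s, m i = d + 1) :
    toricMonomials n d s m = ∅ := by
  refine filter_eq_empty_iff.2 fun a ha htoric => ?_
  rw [mem_piAntidiag] at ha
  rcases hne with hsum | ⟨i, his, hmi⟩
  · have hfirst : ∑ i ∈ range s, (a i + m i) ≤ s * d := by
      simpa using sum_le_sum htoric
    have hrest : ∑ i ∈ Ico s (n + 1), a i ≤ (n + 1 - s) * d := by
      have hbound : ∀ i ∈ Ico s (n + 1), a i ≤ d := fun i hi =>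
        ha.1 ▸ single_le_sum (fun j _ => Nat.zero_le (a j)) (mem_range.2 (mem_Ico.1 hi).2)
      simpa using sum_le_sum hbound
    have hsplit : ∑ i ∈ range s, a i + ∑ i ∈ Ico s (n + 1), a i = d := by
      rw [sum_range_add_sum_Ico _ hs, ha.1]
    have hcount : s * d + (n + 1 - s) * d = n * d + d := by
      rw [← add_mul, Nat.add_sub_cancel' hs, add_one_mul]
    rw [sum_add_distrib] at hfirst
    omega
  · have := htoric i (mem_range.2 his)
    omega

theorem stmt7_general (n d s : ℕ) (hs : s ≤ n + 1)
    (m : ℕ → ℕ) (hm : ∀ i < s, m i ≤ d + 1)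
    (hne : (n * d < ∑ i ∈ Finset.range s, m i) ∨ ∃ i < s, m i = d + 1) :
    ldim n d s m = 0 := by
  rw [ldim_eq_card_toricMonomials hs hm, toricMonomials_eq_empty hs hne, card_empty,
    Nat.cast_zero]

/-- for `s ≤ n+1`, `m_i ≤ d+1`, if the toric divisor is non-effective
(the sum of multiplicities exceeds `nd`, or some `m_i = d+1`), then the linear
virtual dimension is `0`. -/
theorem stmt7 (n d s : ℕ) (hn : 1 ≤ n) (hs : s ≤ n + 1)
    (m : ℕ → ℕ) (hm : ∀ i < s, m i ≤ d + 1)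
    (hne : (n * d < ∑ i ∈ Finset.range s, m i) ∨ ∃ i < s, m i = d + 1) :
    ldim n d s m = 0 :=
  stmt7_general n d s hs m hm hne
end
end

section
/- Let k be a field, n ≥ 2, d ≥ 0, 1 ≤ s ≤ n+1 and let m_1,…,m_s be integers with m_1 ≥ 1 and 0 ≤ m_i ≤ d+1 for all i. Set b := Σ_{i=1}^s m_i − nd and assume either 1 ≤ b ≤ n, or (b ≤ 0 and m_1 = d+1). Then the dimension of the space of homogeneous polynomials of degree d in k[x_1,…,x_{n+1}] having multiplicity at least m_1 − 1 at the coordinate point e_1 of ℙ^n and at least m_i at the coordinate point e_i for 2 ≤ i ≤ s equals the dimension of the space of homogeneous polynomials of degree m_1 − 1 in k[y_1,…,y_n] having multiplicity at least k'_{1i} := max(m_1 + m_i − d − 1, 0) at the coordinate point e_{i−1} of ℙ^{n−1} for 2 ≤ i ≤ s. (This is the equality h^0(D') = h^0(D'_{(1)}|_{E_1}), where D' = D + E_1 and the restriction is to the exceptional divisor of the first point.) -/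
open MvPolynomial Finset

noncomputable section

/-!
Both linear systems are spanned by monomials, because `coordIdeal k N i ^ e` is spanned by the
monomials of degree at least `e` in the variables other than `x_i`; so each dimension is the
number of admissible exponent vectors. An exponent `α` of the left-hand system has
`α_0 ≤ d + 1 - m_0` and `α_i ≤ d - m_i` for `0 < i < s`. If `α_0 ≤ d - m_0`, adding these bounds
(and `Σ α = d` when `s = n + 1`) gives `Σ m_i ≤ n d`, which contradicts `b ≥ 1` and is
impossible outright when `m_0 = d + 1`. Hence `α_0 = d + 1 - m_0`, and deleting it is a bijection
onto the exponents of degree `m_0 - 1` in `n` variables with `β_{i-1} ≤ d - m_i`, which are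
those of the right-hand system.
-/

namespace CoordinatePoint

variable {k : Type} [Field k] {N : ℕ}

/-- The order of vanishing of the monomial `x^α` at the `i`-th coordinate point. -/
def offDegree (i : ℕ) (α : Fin N →₀ ℕ) : ℕ :=
  ∑ j ∈ univ.filter (fun j : Fin N => (j : ℕ) ≠ i), α j

lemma offDegree_add (i : ℕ) (α β : Fin N →₀ ℕ) :
    offDegree i (α + β) = offDegree i α + offDegree i β :=
  sum_add_distrib

lemma monotone_offDegree (i : ℕ) : Monotone (offDegree (N := N) i) :=
  fun _ _ h => sum_le_sum fun j _ => h j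

lemma offDegree_single_one {i : ℕ} {j : Fin N} (hj : (j : ℕ) ≠ i) :
    offDegree i (Finsupp.single j 1) = 1 := by
  classical
  simp [offDegree, Finsupp.single_apply, hj]

lemma offDegree_add_apply (j : Fin N) (α : Fin N →₀ ℕ) :
    offDegree j α + α j = α.degree := by
  classical
  have hfilter : univ.filter (fun l : Fin N => (l : ℕ) ≠ j) = univ.erase j := by
    ext; simp [Fin.val_inj]
  rw [offDegree, hfilter, sum_erase_add _ _ (mem_univ j), Finsupp.degree_eq_sum]

variable (k N) in
def offDegreeIdeal (i e : ℕ) : Ideal (MvPolynomial (Fin N) k) :=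
  restrictSupportIdeal k {α | e ≤ offDegree i α} fun _ _ h (he : e ≤ _) =>
    he.trans (monotone_offDegree i h)

lemma mem_offDegreeIdeal {i e : ℕ} {P : MvPolynomial (Fin N) k} :
    P ∈ offDegreeIdeal k N i e ↔ ∀ α ∈ P.support, e ≤ offDegree i α :=
  Iff.rfl

lemma offDegreeIdeal_mul_le (i a b : ℕ) :
    offDegreeIdeal k N i a * offDegreeIdeal k N i b ≤ offDegreeIdeal k N i (a + b) := by
  classical
  refine Ideal.mul_le.2 fun P hP Q hQ => mem_offDegreeIdeal.2 fun γ hγ => ?_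
  obtain ⟨α, hα, β, hβ, rfl⟩ := Finset.mem_add.1 (support_mul P Q hγ)
  rw [offDegree_add]
  exact add_le_add (mem_offDegreeIdeal.1 hP α hα) (mem_offDegreeIdeal.1 hQ β hβ)

lemma coordIdeal_le_offDegreeIdeal_one (i : ℕ) : coordIdeal k N i ≤ offDegreeIdeal k N i 1 := by
  classical
  refine Ideal.span_le.2 ?_
  rintro _ ⟨j, hj, rfl⟩
  refine mem_offDegreeIdeal.2 fun α hα => ?_
  rw [support_X, mem_singleton] at hα
  rw [hα, offDegree_single_one hj]

lemma monomial_mem_coordIdeal_pow {i e : ℕ} {α : Fin N →₀ ℕ} (h : e ≤ offDegree i α) (c : k) :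
    monomial α c ∈ coordIdeal k N i ^ e := by
  induction e generalizing α with
  | zero => simp
  | succ e ih =>
    obtain ⟨j, hj, hαj⟩ : ∃ j : Fin N, (j : ℕ) ≠ i ∧ α j ≠ 0 := by
      obtain ⟨j, hj, hne⟩ := exists_ne_zero_of_sum_ne_zero (s := univ.filter _)
        (Nat.pos_iff_ne_zero.1 (Nat.lt_of_lt_of_le (Nat.succ_pos e) h))
      exact ⟨j, (mem_filter.1 hj).2, hne⟩
    have hsplit := Finsupp.sub_add_single_one_cancel hαj
    have hoff : offDegree i (α - Finsupp.single j 1) + 1 = offDegree i α := by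
      conv_rhs => rw [← hsplit]
      rw [offDegree_add, offDegree_single_one hj]
    rw [← hsplit, monomial_add_single, pow_succ, pow_one]
    exact Ideal.mul_mem_mul (ih (by omega)) (Ideal.subset_span ⟨j, hj, rfl⟩)

theorem coordIdeal_pow_eq_offDegreeIdeal (i e : ℕ) :
    coordIdeal k N i ^ e = offDegreeIdeal k N i e := by
  refine le_antisymm ?_ fun P hP => ?_
  · induction e with
    | zero => exact fun P _ => mem_offDegreeIdeal.2 fun α _ => Nat.zero_le _
    | succ e ih =>
      calc coordIdeal k N i ^ (e + 1) = coordIdeal k N i ^ e * coordIdeal k N i := pow_succ _ _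
        _ ≤ offDegreeIdeal k N i e * offDegreeIdeal k N i 1 :=
          Ideal.mul_mono ih (coordIdeal_le_offDegreeIdeal_one i)
        _ ≤ offDegreeIdeal k N i (e + 1) := offDegreeIdeal_mul_le i e 1
  · rw [← support_sum_monomial_coeff P]
    exact Ideal.sum_mem _ fun α hα => monomial_mem_coordIdeal_pow (mem_offDegreeIdeal.1 hP α hα) _

variable (k N) in
def coordLinSys (d s : ℕ) (e : ℕ → ℕ) : Submodule k (MvPolynomial (Fin N) k) :=
  homogeneousSubmodule (Fin N) k d ⊓ ⨅ i ∈ range s, (coordIdeal k N i ^ e i).restrictScalars k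

variable (N) in
def coordExponents (d s : ℕ) (e : ℕ → ℕ) : Set (Fin N →₀ ℕ) :=
  {α | α.degree = d ∧ ∀ j : Fin N, (j : ℕ) < s → e j + α j ≤ d}

lemma le_offDegree_iff {e : ℕ} (j : Fin N) {α : Fin N →₀ ℕ} :
    e ≤ offDegree j α ↔ e + α j ≤ α.degree := by
  rw [← offDegree_add_apply j α]
  omega

theorem coordLinSys_eq_restrictSupport {d s : ℕ} (e : ℕ → ℕ) (hs : s ≤ N) :
    coordLinSys k N d s e = restrictSupport k (coordExponents N d s e) := by
  ext P
  simp only [coordLinSys, Submodule.mem_inf, mem_homogeneousSubmodule, Submodule.mem_iInf,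
    Submodule.restrictScalars_mem, mem_range, coordIdeal_pow_eq_offDegreeIdeal,
    mem_offDegreeIdeal, mem_restrictSupport_iff, Set.subset_def, mem_coe]
  constructor
  · rintro ⟨hhom, hmult⟩ α hα
    have hdeg : α.degree = d :=
      (DFunLike.congr_fun Finsupp.degree_eq_weight_one α).trans (hhom (mem_support_iff.1 hα))
    exact ⟨hdeg, fun j hj => hdeg ▸ (le_offDegree_iff j).1 (hmult j hj α hα)⟩
  · intro h
    refine ⟨fun {α} hα => ?_, fun i hi α hα => ?_⟩
    · exact (DFunLike.congr_fun Finsupp.degree_eq_weight_one α).symm.trans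
        (h α (mem_support_iff.2 hα)).1
    · obtain ⟨hdeg, hbound⟩ := h α hα
      exact (le_offDegree_iff ⟨i, by omega⟩).2 (hdeg ▸ hbound ⟨i, by omega⟩ hi)

theorem finrank_coordLinSys_eq_of_equiv {N' d d' s s' : ℕ} {e e' : ℕ → ℕ} (hs : s ≤ N)
    (hs' : s' ≤ N') (φ : coordExponents N d s e ≃ coordExponents N' d' s' e') :
    Module.finrank k (coordLinSys k N d s e) = Module.finrank k (coordLinSys k N' d' s' e') := by
  rw [coordLinSys_eq_restrictSupport e hs, coordLinSys_eq_restrictSupport e' hs']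
  exact ((basisRestrictSupport k _).equiv (basisRestrictSupport k _) φ).finrank_eq

lemma sum_le_mul_of_add_le {n d s : ℕ} {a m : ℕ → ℕ} (hs : s ≤ n + 1)
    (ha : ∑ i ∈ range (n + 1), a i = d) (h : ∀ i < s, a i + m i ≤ d) :
    ∑ i ∈ range s, m i ≤ n * d := by
  have hsum : ∑ i ∈ range s, (a i + m i) ≤ s * d := by
    simpa using sum_le_sum fun i hi => h i (mem_range.1 hi)
  rcases hs.lt_or_eq with hs | rfl
  · calc ∑ i ∈ range s, m i ≤ ∑ i ∈ range s, (a i + m i) := sum_le_sum fun _ _ => le_add_self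
      _ ≤ s * d := hsum
      _ ≤ n * d := Nat.mul_le_mul_right d (by omega)
  · rw [sum_add_distrib, ha, add_mul, one_mul] at hsum
    omega

lemma degree_cons {n : ℕ} (y : ℕ) (β : Fin n →₀ ℕ) : (Finsupp.cons y β).degree = y + β.degree := by
  simp [Finsupp.degree_eq_sum, Fin.sum_univ_succ]

variable {n d s : ℕ} {m : ℕ → ℕ}

abbrev leftMult (m : ℕ → ℕ) (i : ℕ) : ℕ := if i = 0 then m 0 - 1 else m i

/-- The truncated subtraction makes this `max (m 0 + m (i + 1) - d - 1) 0`. -/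
abbrev rightMult (d : ℕ) (m : ℕ → ℕ) (i : ℕ) : ℕ := m 0 + m (i + 1) - (d + 1)

theorem apply_zero_add_eq_of_mem_coordExponents (hs : 1 ≤ s) (hsn : s ≤ n + 1)
    (hb : n * d < ∑ i ∈ range s, m i ∨ m 0 = d + 1) {α : Fin (n + 1) →₀ ℕ}
    (hα : α ∈ coordExponents (n + 1) d s (leftMult m)) : α 0 + m 0 = d + 1 := by
  obtain ⟨hdeg, hbound⟩ := hα
  have h0 := hbound 0 hs
  simp only [Fin.val_zero, leftMult, if_true] at h0
  by_contra hne
  have hle : α 0 + m 0 ≤ d := by omega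
  rcases hb with hb | hb
  · let a : ℕ → ℕ := fun i => if h : i < n + 1 then α ⟨i, h⟩ else 0
    have ha : ∑ i ∈ range (n + 1), a i = d := by
      rw [← hdeg, Finsupp.degree_eq_sum, ← Fin.sum_univ_eq_sum_range]
      simp [a, Fin.is_le]
    have hall : ∀ i < s, a i + m i ≤ d := by
      intro i hi
      rcases Nat.eq_zero_or_pos i with rfl | hi0
      · simpa [a] using hle
      · have := hbound ⟨i, by omega⟩ hi
        simp only [a, leftMult, dif_pos (show i < n + 1 by omega), if_neg hi0.ne'] at this ⊢
        omega
    have := sum_le_mul_of_add_le hsn ha hall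
    omega
  · omega

lemma tail_mem_coordExponents {α : Fin (n + 1) →₀ ℕ}
    (hα : α ∈ coordExponents (n + 1) d s (leftMult m)) (hforced : α 0 + m 0 = d + 1) :
    Finsupp.tail α ∈ coordExponents n (m 0 - 1) (s - 1) (rightMult d m) := by
  obtain ⟨hdeg, hbound⟩ := hα
  rw [← Finsupp.cons_tail α, degree_cons] at hdeg
  refine ⟨by omega, fun j hj => ?_⟩
  have := hbound j.succ (by rw [Fin.val_succ]; omega)
  simp only [leftMult, Fin.val_succ, Nat.add_one_ne_zero, if_false] at this
  have hle := Finsupp.le_degree j (Finsupp.tail α)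
  simp only [rightMult, Finsupp.tail_apply] at hle ⊢
  omega

lemma cons_mem_coordExponents (hm0 : 1 ≤ m 0) (hm0d : m 0 ≤ d + 1) {β : Fin n →₀ ℕ}
    (hβ : β ∈ coordExponents n (m 0 - 1) (s - 1) (rightMult d m)) :
    Finsupp.cons (d + 1 - m 0) β ∈ coordExponents (n + 1) d s (leftMult m) := by
  obtain ⟨hdeg, hbound⟩ := hβ
  refine ⟨by rw [degree_cons]; omega, fun j hj => ?_⟩
  induction j using Fin.cases with
  | zero => simp only [leftMult, Fin.val_zero, if_true, Finsupp.cons_zero]; omega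
  | succ i =>
    have := hbound i (by rw [Fin.val_succ] at hj; omega)
    simp only [rightMult] at this
    simp only [leftMult, Fin.val_succ, Nat.add_one_ne_zero, if_false, Finsupp.cons_succ]
    omega

def coordExponentsTailEquiv (hs : 1 ≤ s) (hsn : s ≤ n + 1) (hm0 : 1 ≤ m 0)
    (hm0d : m 0 ≤ d + 1) (hb : n * d < ∑ i ∈ range s, m i ∨ m 0 = d + 1) :
    coordExponents (n + 1) d s (leftMult m) ≃ coordExponents n (m 0 - 1) (s - 1) (rightMult d m)
    where
  toFun α := ⟨Finsupp.tail α, tail_mem_coordExponents α.2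
    (apply_zero_add_eq_of_mem_coordExponents hs hsn hb α.2)⟩
  invFun β := ⟨Finsupp.cons (d + 1 - m 0) β, cons_mem_coordExponents hm0 hm0d β.2⟩
  left_inv α := by
    have hforced := apply_zero_add_eq_of_mem_coordExponents hs hsn hb α.2
    refine Subtype.ext ((congrArg (Finsupp.cons · _) ?_).trans (Finsupp.cons_tail α.1))
    omega
  right_inv β := Subtype.ext (Finsupp.tail_cons _ _)

end CoordinatePoint

open CoordinatePoint

theorem stmt8_general (k : Type) [Field k] (n d s : ℕ)
    (hs1 : 1 ≤ s) (hs2 : s ≤ n + 1)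
    (m : ℕ → ℕ) (hm0 : 1 ≤ m 0) (hm : ∀ i < s, m i ≤ d + 1)
    (hb : ((1 : ℤ) ≤ (∑ i ∈ Finset.range s, (m i : ℤ)) - (n : ℤ) * d ∧
            (∑ i ∈ Finset.range s, (m i : ℤ)) - (n : ℤ) * d ≤ (n : ℤ)) ∨
          ((∑ i ∈ Finset.range s, (m i : ℤ)) - (n : ℤ) * d ≤ 0 ∧ m 0 = d + 1)) :
    Module.finrank k ↥((homogeneousSubmodule (Fin (n + 1)) k d) ⊓
        ⨅ i ∈ Finset.range s,
          Submodule.restrictScalars k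
            (coordIdeal k (n + 1) i ^ (if i = 0 then m 0 - 1 else m i)))
      = Module.finrank k ↥((homogeneousSubmodule (Fin n) k (m 0 - 1)) ⊓
        ⨅ i ∈ Finset.range (s - 1),
          Submodule.restrictScalars k
            (coordIdeal k n i ^ (m 0 + m (i + 1) - (d + 1)))) := by
  have hb' : n * d < ∑ i ∈ range s, m i ∨ m 0 = d + 1 := by
    rcases hb with ⟨hb, -⟩ | ⟨-, hb⟩
    · exact Or.inl (by zify; omega)
    · exact Or.inr hb
  exact finrank_coordLinSys_eq_of_equiv hs2 (by omega)
    (coordExponentsTailEquiv hs1 hs2 hm0 (hm 0 hs1) hb')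

/-- the dimension of the space of degree-`d` forms in `n+1` variables
with multiplicity `m 0 − 1` at the first coordinate point and `m i` at the others
equals the dimension of the space of degree-`(m 0 − 1)` forms in `n` variables with
multiplicity `max(m 0 + m i − d − 1, 0)` at the coordinate points of `ℙ^{n−1}`. -/
theorem stmt8 (k : Type) [Field k] (n d s : ℕ) (hn : 2 ≤ n)
    (hs1 : 1 ≤ s) (hs2 : s ≤ n + 1)
    (m : ℕ → ℕ) (hm0 : 1 ≤ m 0) (hm : ∀ i < s, m i ≤ d + 1)
    (hb : ((1 : ℤ) ≤ (∑ i ∈ Finset.range s, (m i : ℤ)) - (n : ℤ) * d ∧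
            (∑ i ∈ Finset.range s, (m i : ℤ)) - (n : ℤ) * d ≤ (n : ℤ)) ∨
          ((∑ i ∈ Finset.range s, (m i : ℤ)) - (n : ℤ) * d ≤ 0 ∧ m 0 = d + 1)) :
    Module.finrank k ↥((homogeneousSubmodule (Fin (n + 1)) k d) ⊓
        ⨅ i ∈ Finset.range s,
          Submodule.restrictScalars k
            (coordIdeal k (n + 1) i ^ (if i = 0 then m 0 - 1 else m i)))
      = Module.finrank k ↥((homogeneousSubmodule (Fin n) k (m 0 - 1)) ⊓
        ⨅ i ∈ Finset.range (s - 1),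
          Submodule.restrictScalars k
            (coordIdeal k n i ^ (m 0 + m (i + 1) - (d + 1)))) :=
  stmt8_general k n d s hs1 hs2 m hm0 hm hb
end
end
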